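/- arXiv:2505.21493 — 2 statements merged into one kernel-verified Lean document; each statement's English description precedes it below -/
import Mathlib

section
/- Let Z, Y be finite sets, π_Z a pmf on Z, π_Y(·|z) a pmf on Y, y* ∈ Y, and g : Z → ℝ. Define G_ver(z,y) = 1{y=y*}·g(z) and G_vf(z) = π_Y(y*|z)·g(z). Then Var_{z,y}[G_ver] ≥ Var_z[G_vf], where the variance on the left is over the joint distribution of (z,y) and on the right over z ~ π_Z. -/
/-! Summing out `y` turns both second moments into sums over `z` with the same first moment
`∑ z, πZ z * (πY z y* * g z)`, so only the second moments need comparing; there the pointwise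
bound `(p c)² ≤ p c²` for a probability `p` does the job (it is Jensen's inequality for the
conditional expectation). -/

theorem sq_mul_le_mul_sq {R : Type*} [CommRing R] [LinearOrder R] [IsStrictOrderedRing R]
    {p : R} (hp₀ : 0 ≤ p) (hp₁ : p ≤ 1) (c : R) : (p * c) ^ 2 ≤ p * c ^ 2 := by
  rw [mul_pow]
  gcongr
  simpa only [sq] using mul_le_of_le_one_left hp₀ hp₁

theorem le_one_of_sum_eq_one {ι R : Type*} [Fintype ι] [AddCommMonoid R] [PartialOrder R]
    [IsOrderedAddMonoid R] [One R] {w : ι → R} (hw : ∀ i, 0 ≤ w i) (hsum : ∑ i, w i = 1) (i : ι) :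
    w i ≤ 1 :=
  hsum ▸ Finset.single_le_sum (fun j _ => hw j) (Finset.mem_univ i)

theorem verifree_variance_reduction_general
    {Z Y : Type*} [Fintype Z] [Fintype Y] [DecidableEq Y]
    (πZ : Z → ℝ) (hπZ : ∀ z, 0 ≤ πZ z)
    (πY : Z → Y → ℝ) (hπY : ∀ z y, 0 ≤ πY z y) (hπYsum : ∀ z, ∑ y, πY z y = 1)
    (ystar : Y) (g : Z → ℝ) :
    (∑ z, πZ z * (πY z ystar * g z) ^ 2)
        - (∑ z, πZ z * (πY z ystar * g z)) ^ 2
      ≤ (∑ z, πZ z * ∑ y, πY z y * ((if y = ystar then (1 : ℝ) else 0) * g z) ^ 2)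
        - (∑ z, πZ z * ∑ y, πY z y * ((if y = ystar then (1 : ℝ) else 0) * g z)) ^ 2 := by
  simp only [ite_mul, one_mul, zero_mul, ite_pow, ne_eq, OfNat.ofNat_ne_zero,
    not_false_eq_true, zero_pow, mul_ite, mul_zero, Finset.sum_ite_eq', Finset.mem_univ, if_true]
  gcongr with z
  · exact hπZ z
  · exact sq_mul_le_mul_sq (hπY z ystar) (le_one_of_sum_eq_one (hπY z) (hπYsum z) ystar) (g z)

/-- Rao-Blackwell variance reduction (scalar version):
Var_{z,y}[1{y=y*} g(z)] ≥ Var_z[π_Y(y*|z) g(z)]. -/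
theorem verifree_variance_reduction
    {Z Y : Type*} [Fintype Z] [Fintype Y] [DecidableEq Y]
    (πZ : Z → ℝ) (hπZ : ∀ z, 0 ≤ πZ z) (hπZsum : ∑ z, πZ z = 1)
    (πY : Z → Y → ℝ) (hπY : ∀ z y, 0 ≤ πY z y) (hπYsum : ∀ z, ∑ y, πY z y = 1)
    (ystar : Y) (g : Z → ℝ) :
    (∑ z, πZ z * (πY z ystar * g z) ^ 2)
        - (∑ z, πZ z * (πY z ystar * g z)) ^ 2
      ≤ (∑ z, πZ z * ∑ y, πY z y * ((if y = ystar then (1 : ℝ) else 0) * g z) ^ 2)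
        - (∑ z, πZ z * ∑ y, πY z y * ((if y = ystar then (1 : ℝ) else 0) * g z)) ^ 2 :=
  verifree_variance_reduction_general πZ hπZ πY hπY hπYsum ystar g
end

section
/- Let Z, Y be finite sets, π_Z a pmf on Z, π_Y(·|z) a pmf on Y, y* ∈ Y, and g, h : Z → ℝ. Define the full verifier estimator Ĝ(z,y) = 1{y=y*}(g(z) + h(z)) and the full VeriFree estimator Ĝ'(z) = π_Y(y*|z)(g(z) + h(z)). Then E_{z,y}[Ĝ] = E_z[Ĝ'] and Var_{z,y}[Ĝ] ≥ Var_z[Ĝ']. -/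
/-! Summing out `y` collapses the indicator, so both estimators have the same mean `E_z[π_Y(y*|z) c(z)]`
with `c = g + h`, while the second moments are `E_z[π_Y(y*|z) c(z)^2]` and `E_z[(π_Y(y*|z) c(z))^2]`;
the latter is smaller pointwise since `p^2 ≤ p` for `0 ≤ p ≤ 1`. -/

theorem sum_mul_ite_mul_pow {Y R : Type*} [Fintype Y] [DecidableEq Y] [CommSemiring R]
    (p : Y → R) (y₀ : Y) (c : R) {n : ℕ} (hn : n ≠ 0) :
    ∑ y, p y * ((if y = y₀ then 1 else 0) * c) ^ n = p y₀ * c ^ n := by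
  rw [Finset.sum_eq_single y₀ (fun y _ hy => by simp [hy, hn]) (by simp)]
  simp

theorem mul_sq_le_mul_sq_of_le_one {R : Type*} [CommRing R] [LinearOrder R] [IsOrderedRing R]
    {p : R} (c : R) (h0 : 0 ≤ p) (h1 : p ≤ 1) : (p * c) ^ 2 ≤ p * c ^ 2 := by
  rw [mul_pow, sq p]
  exact mul_le_mul_of_nonneg_right (by simpa using mul_le_mul_of_nonneg_left h1 h0) (sq_nonneg c)

theorem verifree_full_estimator_general
    {Z Y : Type*} [Fintype Z] [Fintype Y] [DecidableEq Y]
    (πZ : Z → ℝ) (hπZ : ∀ z, 0 ≤ πZ z)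
    (πY : Z → Y → ℝ) (hπY : ∀ z y, 0 ≤ πY z y) (hπYsum : ∀ z, ∑ y, πY z y = 1)
    (ystar : Y) (g h : Z → ℝ) :
    (∑ z, πZ z * ∑ y, πY z y * ((if y = ystar then (1 : ℝ) else 0) * (g z + h z))
        = ∑ z, πZ z * (πY z ystar * (g z + h z)))
    ∧ (∑ z, πZ z * (πY z ystar * (g z + h z)) ^ 2)
          - (∑ z, πZ z * (πY z ystar * (g z + h z))) ^ 2
        ≤ (∑ z, πZ z * ∑ y, πY z y * ((if y = ystar then (1 : ℝ) else 0) * (g z + h z)) ^ 2)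
          - (∑ z, πZ z * ∑ y, πY z y * ((if y = ystar then (1 : ℝ) else 0) * (g z + h z))) ^ 2 := by
  have hmean : ∀ z, ∑ y, πY z y * ((if y = ystar then (1 : ℝ) else 0) * (g z + h z))
      = πY z ystar * (g z + h z) := fun z => by
    simpa only [pow_one] using sum_mul_ite_mul_pow (πY z) ystar (g z + h z) one_ne_zero
  have hsecond : ∀ z, ∑ y, πY z y * ((if y = ystar then (1 : ℝ) else 0) * (g z + h z)) ^ 2
      = πY z ystar * (g z + h z) ^ 2 := fun z =>
    sum_mul_ite_mul_pow (πY z) ystar (g z + h z) two_ne_zero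
  have hle_one : ∀ z, πY z ystar ≤ 1 := fun z =>
    hπYsum z ▸ Finset.single_le_sum (fun y _ => hπY z y) (Finset.mem_univ ystar)
  simp only [hmean, hsecond, true_and]
  exact sub_le_sub_right (Finset.sum_le_sum fun z _ => mul_le_mul_of_nonneg_left
    (mul_sq_le_mul_sq_of_le_one _ (hπY z ystar) (hle_one z)) (hπZ z)) _

/-- Full-gradient scalar abstraction: with Ĝ(z,y)=1{y=y*}(g(z)+h(z)) and
Ĝ'(z)=π_Y(y*|z)(g(z)+h(z)), the means agree and Var[Ĝ] ≥ Var[Ĝ']. -/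
theorem verifree_full_estimator
    {Z Y : Type*} [Fintype Z] [Fintype Y] [DecidableEq Y]
    (πZ : Z → ℝ) (hπZ : ∀ z, 0 ≤ πZ z) (hπZsum : ∑ z, πZ z = 1)
    (πY : Z → Y → ℝ) (hπY : ∀ z y, 0 ≤ πY z y) (hπYsum : ∀ z, ∑ y, πY z y = 1)
    (ystar : Y) (g h : Z → ℝ) :
    (∑ z, πZ z * ∑ y, πY z y * ((if y = ystar then (1 : ℝ) else 0) * (g z + h z))
        = ∑ z, πZ z * (πY z ystar * (g z + h z)))
    ∧ (∑ z, πZ z * (πY z ystar * (g z + h z)) ^ 2)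
          - (∑ z, πZ z * (πY z ystar * (g z + h z))) ^ 2
        ≤ (∑ z, πZ z * ∑ y, πY z y * ((if y = ystar then (1 : ℝ) else 0) * (g z + h z)) ^ 2)
          - (∑ z, πZ z * ∑ y, πY z y * ((if y = ystar then (1 : ℝ) else 0) * (g z + h z))) ^ 2 :=
  verifree_full_estimator_general πZ hπZ πY hπY hπYsum ystar g h
end
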